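/- arXiv:2510.14093 — 5 statements merged into one kernel-verified Lean document; each statement's English description precedes it below -/
import Mathlib

section
/- (Proposition VGcf) Let Z be a standard Gaussian random variable and let V be a Gamma(α, β) distributed random variable independent of Z, with α, β > 0, and let σ > 0 be fixed. Then the characteristic function of the symmetric Variance Gamma variable X = σ√V · Z is ψ_X(t) = (1 + t²σ²/(2β))^{-α} for all real t. -/
/-!
Conditionally on `V = v`, the variable `σ √v Z` is centred Gaussian with variance `σ² v`, so
its characteristic function at `t` is `exp (-(t² σ² / 2) v)`. Averaging over `V` (Fubini on the
joint law, which is a product by independence) turns the characteristic function of `X` into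
the moment generating function of `V` at `-t² σ² / 2`, and the Gamma law has
`E[exp (s V)] = (1 - s / β) ^ (-α)` for `s < β`.
-/

open MeasureTheory ProbabilityTheory Complex Set

lemma gammaPDFReal_mul_exp_eq_indicator {a r t : ℝ} (x : ℝ) :
    gammaPDFReal a r x * Real.exp (t * x)
      = (Ici 0).indicator
          (fun x ↦ r ^ a / Real.Gamma a * (x ^ (a - 1) * Real.exp (-((r - t) * x)))) x := by
  by_cases hx : 0 ≤ x
  · rw [gammaPDFReal, if_pos hx, indicator_of_mem (mem_Ici.mpr hx), mul_assoc, mul_assoc,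
      ← Real.exp_add]
    ring_nf
  · rw [gammaPDFReal, if_neg hx, indicator_of_notMem (by simpa using hx), zero_mul]

lemma mgf_gammaMeasure {a r t : ℝ} (ha : 0 < a) (hr : 0 < r) (ht : t < r) :
    mgf id (gammaMeasure a r) t = (1 - t / r) ^ (-a) := by
  have hrt : 0 < r - t := sub_pos.mpr ht
  rw [mgf, gammaMeasure, integral_withDensity_eq_integral_toReal_smul (f := gammaPDF a r)
    (measurable_gammaPDFReal a r).ennreal_ofReal (ae_of_all _ fun _ ↦ ENNReal.ofReal_lt_top)]
  simp_rw [gammaPDF, ENNReal.toReal_ofReal (gammaPDFReal_nonneg ha hr _), smul_eq_mul, id,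
    gammaPDFReal_mul_exp_eq_indicator]
  rw [integral_indicator measurableSet_Ici, integral_Ici_eq_integral_Ioi, integral_const_mul,
    Real.integral_rpow_mul_exp_neg_mul_Ioi ha hrt]
  have hΓ : Real.Gamma a ≠ 0 := (Real.Gamma_pos_of_pos ha).ne'
  rw [show 1 - t / r = (r - t) / r by field_simp, Real.rpow_neg (by positivity),
    Real.div_rpow hrt.le hr.le, one_div, Real.inv_rpow hrt.le, inv_div]
  field_simp

lemma ae_nonneg_gammaMeasure (a r : ℝ) : ∀ᵐ x ∂gammaMeasure a r, 0 ≤ x := by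
  rw [ae_iff, show {x : ℝ | ¬0 ≤ x} = Iio 0 by ext; simp, gammaMeasure,
    withDensity_apply _ measurableSet_Iio]
  exact lintegral_gammaPDF_of_nonpos le_rfl

lemma integral_cexp_mul_sqrt_mul_gaussianReal {v : ℝ} (hv : 0 ≤ v) (t : ℝ) :
    ∫ z, cexp (I * t * (√v * z)) ∂gaussianReal 0 1 = Real.exp (-(t ^ 2 / 2) * v) := by
  calc ∫ z, cexp (I * t * (√v * z)) ∂gaussianReal 0 1
      = charFun (gaussianReal 0 1) (t * √v) := by
        rw [charFun_apply_real]
        congr 1 with z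
        congr 1
        push_cast
        ring
    _ = Real.exp (-(t ^ 2 / 2) * v) := by
        rw [charFun_gaussianReal, ← Complex.ofReal_pow, mul_pow, Real.sq_sqrt hv,
          Complex.ofReal_exp]
        congr 1
        push_cast
        ring

section GaussianScaleMixture

variable {Ω : Type*} [MeasurableSpace Ω] {P : Measure Ω} [IsProbabilityMeasure P]

lemma integral_cexp_mul_sqrt_mul_eq_mgf {V Z : Ω → ℝ} (hVm : AEMeasurable V P)
    (hZm : AEMeasurable Z P) (hV : 0 ≤ᵐ[P] V) (hZ : P.map Z = gaussianReal 0 1)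
    (hindep : IndepFun V Z P) (t : ℝ) :
    ∫ ω, cexp (I * t * (√(V ω) * Z ω)) ∂P = mgf V P (-(t ^ 2 / 2)) := by
  set F : ℝ × ℝ → ℂ := fun p ↦ cexp (I * t * (√p.1 * p.2))
  have hFc : Continuous F := by fun_prop
  have hjoint : P.map (fun ω ↦ (V ω, Z ω)) = (P.map V).prod (gaussianReal 0 1) := by
    rw [← hZ]; exact (indepFun_iff_map_prod_eq_prod_map_map hVm hZm).mp hindep
  have hFint : Integrable F ((P.map V).prod (gaussianReal 0 1)) := by
    refine .of_bound hFc.aestronglyMeasurable 1 (ae_of_all _ fun p ↦ ?_)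
    dsimp only [F]
    rw [show I * t * (√p.1 * p.2) = ((t * (√p.1 * p.2) : ℝ) : ℂ) * I by push_cast; ring,
      Complex.norm_exp_ofReal_mul_I]
  have hVlaw : ∀ᵐ v ∂P.map V, 0 ≤ v := ae_map_iff hVm measurableSet_Ici |>.mpr hV
  calc ∫ ω, cexp (I * t * (√(V ω) * Z ω)) ∂P
      = ∫ p, F p ∂(P.map V).prod (gaussianReal 0 1) := by
        rw [← hjoint, integral_map (hVm.prodMk hZm) hFc.aestronglyMeasurable]
    _ = ∫ v, ∫ z, F (v, z) ∂gaussianReal 0 1 ∂P.map V := integral_prod F hFint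
    _ = ∫ v, (Real.exp (-(t ^ 2 / 2) * v) : ℂ) ∂P.map V := by
        refine integral_congr_ae ?_
        filter_upwards [hVlaw] with v hv
        exact integral_cexp_mul_sqrt_mul_gaussianReal hv t
    _ = mgf V P (-(t ^ 2 / 2)) := by rw [integral_complex_ofReal, ← mgf_id_map hVm]; rfl

end GaussianScaleMixture

theorem charFun_symmetricVarianceGamma_general
    {Ω : Type*} [MeasurableSpace Ω] (P : Measure Ω) [IsProbabilityMeasure P]
    (α β σ : ℝ) (hα : 0 < α) (hβ : 0 < β)
    (V Z : Ω → ℝ) (hVm : Measurable V) (hZm : Measurable Z)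
    (hV : Measure.map V P = gammaMeasure α β)
    (hZ : Measure.map Z P = gaussianReal 0 1)
    (hindep : IndepFun V Z P) (t : ℝ) :
    ∫ ω, Complex.exp (Complex.I * t * (σ * Real.sqrt (V ω) * Z ω)) ∂P
      = (((1 + t ^ 2 * σ ^ 2 / (2 * β)) ^ (-α) : ℝ) : ℂ) := by
  have hV0 : 0 ≤ᵐ[P] V :=
    ae_of_ae_map (p := fun v ↦ 0 ≤ v) hVm.aemeasurable (hV ▸ ae_nonneg_gammaMeasure α β)
  have hs : -((t * σ) ^ 2 / 2) < β := by nlinarith [sq_nonneg (t * σ)]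
  calc ∫ ω, cexp (I * t * (σ * √(V ω) * Z ω)) ∂P
      = ∫ ω, cexp (I * ↑(t * σ) * (√(V ω) * Z ω)) ∂P := by
        push_cast
        simp_rw [mul_assoc]
    _ = mgf V P (-((t * σ) ^ 2 / 2)) :=
        integral_cexp_mul_sqrt_mul_eq_mgf hVm.aemeasurable hZm.aemeasurable hV0 hZ hindep _
    _ = (((1 + t ^ 2 * σ ^ 2 / (2 * β)) ^ (-α) : ℝ) : ℂ) := by
        rw [← mgf_id_map hVm.aemeasurable, hV, mgf_gammaMeasure hα hβ hs]
        ring_nf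

/-- **Proposition VGcf.** The characteristic function of the symmetric
Variance Gamma variable `X = σ√V ⬝ Z`, where `Z` is standard Gaussian and `V` is an
independent `Gamma(α, β)` variable, is `t ↦ (1 + t²σ²/(2β))^(-α)`. -/
theorem charFun_symmetricVarianceGamma
    {Ω : Type*} [MeasurableSpace Ω] (P : Measure Ω) [IsProbabilityMeasure P]
    (α β σ : ℝ) (hα : 0 < α) (hβ : 0 < β) (hσ : 0 < σ)
    (V Z : Ω → ℝ) (hVm : Measurable V) (hZm : Measurable Z)
    (hV : Measure.map V P = gammaMeasure α β)
    (hZ : Measure.map Z P = gaussianReal 0 1)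
    (hindep : IndepFun V Z P) (t : ℝ) :
    ∫ ω, Complex.exp (Complex.I * t * (σ * Real.sqrt (V ω) * Z ω)) ∂P
      = (((1 + t ^ 2 * σ ^ 2 / (2 * β)) ^ (-α) : ℝ) : ℂ) :=
  charFun_symmetricVarianceGamma_general P α β σ hα hβ V Z hVm hZm hV hZ hindep t
end

section
/- Let c, θ ∈ ℝ, σ > 0, α, β > 0, let Z be a standard Gaussian random variable, and let V be a Gamma(α, β) distributed random variable independent of Z. Then the law of the Variance Gamma variable X = c + θV + σ√V · Z is absolutely continuous with respect to Lebesgue measure, with density f_X(x) = ∫₀^∞ (1/√(2πσ²v)) exp(−(x − c − θv)²/(2σ²v)) · (β^α/Γ(α)) v^{α−1} e^{−βv} dv. -/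
/-!
Conditionally on `V = v > 0`, `X = c + θv + σ√v Z` is Gaussian with mean `c + θv` and variance
`σ²v`. By independence the law of `X` is the image of `Gamma(α, β) ⊗ N(0, 1)`, and Tonelli then
shows that it has the `ℝ≥0∞`-valued mixture density `x ↦ ∫⁻ v, N(c + θv, σ²v)(x) dΓ(v)`. This
density has total mass one, so it is finite almost everywhere, and there it agrees with the
real-valued (Bochner) integral of the statement.
-/

open MeasureTheory ProbabilityTheory Real
open scoped ENNReal NNReal

theorem ProbabilityTheory.IndepFun.map_comp_prodMk {Ω β γ δ : Type*} [MeasurableSpace Ω]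
    [MeasurableSpace β] [MeasurableSpace γ] [MeasurableSpace δ] {P : Measure Ω}
    [IsFiniteMeasure P] {V : Ω → β} {Z : Ω → γ} (hVZ : IndepFun V Z P)
    (hV : Measurable V) (hZ : Measurable Z) {f : β × γ → δ} (hf : Measurable f) :
    P.map (fun ω => f (V ω, Z ω)) = ((P.map V).prod (P.map Z)).map f := by
  rw [← (indepFun_iff_map_prod_eq_prod_map_map hV.aemeasurable hZ.aemeasurable).1 hVZ,
    Measure.map_map hf (hV.prodMk hZ)]
  rfl

theorem MeasureTheory.Measure.map_prod_eq_withDensity_lintegral {α β γ : Type*}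
    [MeasurableSpace α] [MeasurableSpace β] [MeasurableSpace γ]
    {μ : Measure α} {ν : Measure β} {ρ : Measure γ} [SFinite μ] [SFinite ν] [SFinite ρ]
    {f : α × β → γ} (hf : Measurable f) {k : α → γ → ℝ≥0∞}
    (hk : Measurable (Function.uncurry k))
    (hsection : ∀ᵐ a ∂μ, ν.map (fun b => f (a, b)) = ρ.withDensity (k a)) :
    (μ.prod ν).map f = ρ.withDensity fun x => ∫⁻ a, k a x ∂μ := by
  ext s hs
  rw [Measure.map_apply hf hs, Measure.prod_apply (hf hs), withDensity_apply _ hs]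
  calc ∫⁻ a, ν (Prod.mk a ⁻¹' (f ⁻¹' s)) ∂μ = ∫⁻ a, ∫⁻ x in s, k a x ∂ρ ∂μ := by
        refine lintegral_congr_ae (hsection.mono fun a ha => ?_)
        dsimp only
        rw [← withDensity_apply _ hs, ← ha, Measure.map_apply (by fun_prop) hs]
        rfl
    _ = ∫⁻ x in s, ∫⁻ a, k a x ∂μ ∂ρ := lintegral_lintegral_swap hk.aemeasurable

theorem MeasureTheory.withDensity_ofReal_integral_eq_withDensity_lintegral {X Y : Type*}
    [MeasurableSpace X] [MeasurableSpace Y] {m : Measure X} {ρ : Measure Y} [SFinite ρ]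
    {g : X → Y → ℝ} (hg : Measurable (Function.uncurry g)) (hg_nonneg : ∀ x, 0 ≤ᵐ[ρ] g x)
    (hfin : ∫⁻ x, ∫⁻ y, ENNReal.ofReal (g x y) ∂ρ ∂m ≠ ∞) :
    m.withDensity (fun x => ENNReal.ofReal (∫ y, g x y ∂ρ))
      = m.withDensity fun x => ∫⁻ y, ENNReal.ofReal (g x y) ∂ρ := by
  have hH : Measurable fun x => ∫⁻ y, ENNReal.ofReal (g x y) ∂ρ :=
    hg.ennreal_ofReal.lintegral_prod_right'
  refine withDensity_congr_ae ((ae_lt_top hH hfin).mono fun x hx => ?_)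
  dsimp only
  rw [integral_eq_lintegral_of_nonneg_ae (hg_nonneg x)
    (hg.comp measurable_prodMk_left).aestronglyMeasurable, ENNReal.ofReal_toReal hx.ne]

theorem ProbabilityTheory.gammaMeasure_eq_withDensity_restrict_Ioi (a r : ℝ) :
    gammaMeasure a r = (volume.restrict (Set.Ioi 0)).withDensity
      fun x => ENNReal.ofReal (r ^ a / Gamma a * x ^ (a - 1) * exp (-(r * x))) := by
  have : gammaPDF a r = (Set.Ici 0).indicator
      fun x => ENNReal.ofReal (r ^ a / Gamma a * x ^ (a - 1) * exp (-(r * x))) := by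
    ext x
    by_cases hx : 0 ≤ x <;> simp [gammaPDF, gammaPDFReal, hx]
  rw [gammaMeasure, this, withDensity_indicator measurableSet_Ici,
    Measure.restrict_congr_set Ioi_ae_eq_Ici]

theorem ProbabilityTheory.ae_gammaMeasure_pos (a r : ℝ) : ∀ᵐ x ∂gammaMeasure a r, 0 < x := by
  rw [gammaMeasure_eq_withDensity_restrict_Ioi]
  exact (withDensity_absolutelyContinuous _ _).ae_le (ae_restrict_mem measurableSet_Ioi)

theorem ProbabilityTheory.gaussianReal_zero_one_map_const_add_mul (a b : ℝ) :
    (gaussianReal 0 1).map (fun z => a + b * z) = gaussianReal a (b ^ 2).toNNReal := by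
  have : (fun z => a + b * z) = (a + ·) ∘ (b * ·) := rfl
  rw [this, ← Measure.map_map (measurable_const_add a) (measurable_const_mul b),
    gaussianReal_map_const_mul, gaussianReal_map_const_add, mul_zero, zero_add, mul_one,
    Real.toNNReal_of_nonneg (sq_nonneg b)]

theorem ProbabilityTheory.gaussianPDF_toNNReal {v : ℝ} (hv : 0 < v) (μ x : ℝ) :
    gaussianPDF μ v.toNNReal x
      = ENNReal.ofReal (1 / √(2 * π * v) * exp (-(x - μ) ^ 2 / (2 * v))) := by
  rw [gaussianPDF, gaussianPDFReal, Real.coe_toNNReal _ hv.le, one_div]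

/-- The law of the Variance Gamma variable `X = c + θV + σ√V ⬝ Z` is
absolutely continuous with respect to Lebesgue measure, with the mixture density
`x ↦ ∫₀^∞ (1/√(2πσ²v)) exp(-(x - c - θv)²/(2σ²v)) ⬝ (β^α/Γ(α)) v^(α-1) e^(-βv) dv`. -/
theorem varianceGamma_density
    {Ω : Type*} [MeasurableSpace Ω] (P : Measure Ω) [IsProbabilityMeasure P]
    (α β c θ σ : ℝ) (hα : 0 < α) (hβ : 0 < β) (hσ : 0 < σ)
    (V Z : Ω → ℝ) (hVm : Measurable V) (hZm : Measurable Z)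
    (hV : Measure.map V P = gammaMeasure α β)
    (hZ : Measure.map Z P = gaussianReal 0 1)
    (hindep : IndepFun V Z P) :
    Measure.map (fun ω => c + θ * V ω + σ * Real.sqrt (V ω) * Z ω) P
      = volume.withDensity (fun x => ENNReal.ofReal
          (∫ v in Set.Ioi (0 : ℝ),
            (1 / Real.sqrt (2 * π * σ ^ 2 * v))
              * Real.exp (-(x - c - θ * v) ^ 2 / (2 * σ ^ 2 * v))
              * (β ^ α / Real.Gamma α) * v ^ (α - 1) * Real.exp (-β * v))) := by
  set g : ℝ → ℝ → ℝ := fun x v => (1 / √(2 * π * σ ^ 2 * v))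
    * exp (-(x - c - θ * v) ^ 2 / (2 * σ ^ 2 * v)) * (β ^ α / Gamma α) * v ^ (α - 1)
    * exp (-β * v)
  set k : ℝ → ℝ → ℝ≥0∞ := fun v => gaussianPDF (c + θ * v) (σ ^ 2 * v).toNNReal
  have hk : Measurable (Function.uncurry k) := measurable_uncurry_gaussianPDF.comp
    (f := fun p : ℝ × ℝ => (c + θ * p.1, (σ ^ 2 * p.1).toNNReal, p.2)) (by fun_prop)
  have := isProbabilityMeasure_gammaMeasure hα hβ
  have hsection : ∀ᵐ v ∂gammaMeasure α β,
      (gaussianReal 0 1).map (fun z => c + θ * v + σ * √v * z) = volume.withDensity (k v) := by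
    filter_upwards [ae_gammaMeasure_pos α β] with v hv
    rw [gaussianReal_zero_one_map_const_add_mul, mul_pow, sq_sqrt hv.le,
      gaussianReal_of_var_ne_zero _ (Real.toNNReal_pos.2 (by positivity)).ne']
  have hdensity (x : ℝ) :
      ∫⁻ v, k v x ∂gammaMeasure α β = ∫⁻ v in Set.Ioi 0, ENNReal.ofReal (g x v) := by
    rw [gammaMeasure_eq_withDensity_restrict_Ioi,
      lintegral_withDensity_eq_lintegral_mul _ (by fun_prop) (by fun_prop)]
    refine setLIntegral_congr_fun measurableSet_Ioi fun v (hv : 0 < v) => ?_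
    rw [Pi.mul_apply, show k v x = _ from gaussianPDF_toNNReal (by positivity) _ x,
      ← ENNReal.ofReal_mul' (by positivity)]
    congr 1
    dsimp only [g]
    ring_nf
  have hlaw : P.map (fun ω => c + θ * V ω + σ * √(V ω) * Z ω)
      = volume.withDensity fun x => ∫⁻ v in Set.Ioi 0, ENNReal.ofReal (g x v) := by
    refine (hindep.map_comp_prodMk hVm hZm
      (f := fun p => c + θ * p.1 + σ * √p.1 * p.2) (by fun_prop)).trans ?_
    rw [hV, hZ, Measure.map_prod_eq_withDensity_lintegral (by fun_prop) hk hsection]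
    simp_rw [hdensity]
  have hg_nonneg : ∀ x, 0 ≤ᵐ[volume.restrict (Set.Ioi 0)] g x := fun x =>
    (ae_restrict_mem measurableSet_Ioi).mono fun v (hv : 0 < v) => by
      have := Gamma_pos_of_pos hα
      positivity
  have hfin : ∫⁻ x, ∫⁻ v in Set.Ioi 0, ENNReal.ofReal (g x v) ≠ ∞ := by
    rw [← setLIntegral_univ, ← withDensity_apply _ MeasurableSet.univ, ← hlaw]
    exact measure_ne_top _ _
  rw [hlaw]
  exact (withDensity_ofReal_integral_eq_withDensity_lintegral (by fun_prop) hg_nonneg hfin).symm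
end

section
/- Let λ > 0, σ > 0, let Z be a standard Gaussian random variable, and let V be an exponentially distributed random variable with rate λ independent of Z. Then X = σ√V · Z has a Laplace distribution: its law has density f(x) = (√(2λ)/(2σ)) exp(−√(2λ)|x|/σ) with respect to Lebesgue measure. -/
/-!
Conditionally on `V = v`, the variable `X` is a centred Gaussian of variance `σ²v`, so the law
of `X` has density `x ↦ ∫ λ e^{-λv} φ_{σ²v}(x) dv`. The substitution `v = w²` turns this into
`∫₀^∞ exp(-a w² - b / w²) dw`, which equals `√(π/a)/2 · exp(-2√(ab))`: the integrand is
invariant under `w ↦ k / w` with `k = √(b/a)`, and the substitution `u = w - k / w` turns the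
symmetrised integral into a Gaussian one, since `a w² + b / w² = a (w - k / w)² + 2√(ab)`.
-/

open MeasureTheory ProbabilityTheory Real Set
open scoped ENNReal NNReal

lemma lintegral_comp_sq_Ioi (f : ℝ → ℝ≥0∞) :
    ∫⁻ w in Ioi 0, ENNReal.ofReal (2 * w) * f (w ^ 2) = ∫⁻ v in Ioi 0, f v := by
  have himage : (· ^ 2) '' Ioi (0 : ℝ) = Ioi 0 := by
    ext v
    refine ⟨?_, fun hv => ⟨√v, sqrt_pos.2 hv, sq_sqrt hv.le⟩⟩
    rintro ⟨w, hw, rfl⟩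
    exact pow_pos (mem_Ioi.1 hw) 2
  have hderiv : ∀ w ∈ Ioi (0 : ℝ), HasDerivWithinAt (· ^ 2) (2 * w) (Ioi 0) w :=
    fun w _ => by simpa using (hasDerivAt_pow 2 w).hasDerivWithinAt
  have hinj : InjOn (· ^ 2) (Ioi (0 : ℝ)) := fun w hw w' hw' h =>
    (pow_left_inj₀ (le_of_lt hw) (le_of_lt hw') two_ne_zero).1 h
  conv_rhs =>
    rw [← himage, lintegral_image_eq_lintegral_abs_deriv_mul measurableSet_Ioi hderiv hinj]
  refine setLIntegral_congr_fun measurableSet_Ioi fun w (hw : 0 < w) => ?_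
  rw [abs_of_pos (by positivity)]

lemma lintegral_comp_div_Ioi {k : ℝ} (hk : 0 < k) (f : ℝ → ℝ≥0∞) :
    ∫⁻ z in Ioi 0, ENNReal.ofReal (k / z ^ 2) * f (k / z) = ∫⁻ z in Ioi 0, f z := by
  have himage : (k / ·) '' Ioi (0 : ℝ) = Ioi 0 := by
    ext y
    refine ⟨fun ⟨z, hz, hzy⟩ => hzy ▸ div_pos hk hz,
      fun hy => ⟨k / y, div_pos hk hy, div_div_cancel₀ hk.ne'⟩⟩
  have hderiv : ∀ z ∈ Ioi (0 : ℝ), HasDerivWithinAt (k / ·) (-(k / z ^ 2)) (Ioi 0) z :=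
    fun z hz => by
      have := (hasDerivAt_inv (ne_of_gt hz)).const_mul k
      simp only [← div_eq_mul_inv, mul_neg] at this
      exact this.hasDerivWithinAt
  have hinj : InjOn (k / ·) (Ioi (0 : ℝ)) := fun z _ z' _ h =>
    inv_injective (mul_left_cancel₀ hk.ne' h)
  conv_rhs =>
    rw [← himage, lintegral_image_eq_lintegral_abs_deriv_mul measurableSet_Ioi hderiv hinj]
  refine setLIntegral_congr_fun measurableSet_Ioi fun z (hz : 0 < z) => ?_
  rw [abs_neg, abs_of_pos (by positivity)]

lemma lintegral_comp_sub_div_Ioi {k : ℝ} (hk : 0 < k) (f : ℝ → ℝ≥0∞) :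
    ∫⁻ z in Ioi 0, ENNReal.ofReal (1 + k / z ^ 2) * f (z - k / z) = ∫⁻ u, f u := by
  have himage : (fun z => z - k / z) '' Ioi (0 : ℝ) = univ := by
    refine eq_univ_of_forall fun u => ?_
    -- the positive root of `z ^ 2 - u * z - k`
    have hdisc : u ^ 2 < (√(u ^ 2 + 4 * k)) ^ 2 := by
      rw [sq_sqrt (by positivity)]; linarith
    have hz : 0 < u + √(u ^ 2 + 4 * k) := by
      nlinarith [abs_lt_of_sq_lt_sq' hdisc (sqrt_nonneg _), sqrt_nonneg (u ^ 2 + 4 * k)]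
    refine ⟨(u + √(u ^ 2 + 4 * k)) / 2, half_pos hz, ?_⟩
    field_simp
    nlinarith [sq_sqrt (show 0 ≤ u ^ 2 + 4 * k by positivity)]
  have hderiv : ∀ z ∈ Ioi (0 : ℝ),
      HasDerivWithinAt (fun z => z - k / z) (1 + k / z ^ 2) (Ioi 0) z := fun z hz => by
    have := (hasDerivAt_id' z).sub ((hasDerivAt_inv (ne_of_gt hz)).const_mul k)
    simp only [← div_eq_mul_inv, mul_neg, sub_neg_eq_add] at this
    exact this.hasDerivWithinAt
  have hinj : InjOn (fun z => z - k / z) (Ioi (0 : ℝ)) := by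
    intro z (hz : 0 < z) z' (hz' : 0 < z') h
    have : (z - z') * (z * z' + k) = 0 := by
      field_simp at h
      linear_combination h
    rcases mul_eq_zero.1 this with h | h
    · linarith
    · nlinarith [mul_pos hz hz']
  conv_rhs => rw [← setLIntegral_univ, ← himage,
    lintegral_image_eq_lintegral_abs_deriv_mul measurableSet_Ioi hderiv hinj]
  refine setLIntegral_congr_fun measurableSet_Ioi fun z (hz : 0 < z) => ?_
  rw [abs_of_pos (by positivity)]

lemma lintegral_exp_neg_mul_sq {a : ℝ} (ha : 0 < a) :
    ∫⁻ u, ENNReal.ofReal (exp (-a * u ^ 2)) = ENNReal.ofReal √(π / a) := by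
  rw [← ofReal_integral_eq_lintegral_ofReal (integrable_exp_neg_mul_sq ha)
    (ae_of_all _ fun _ => (exp_pos _).le), integral_gaussian]

lemma two_mul_lintegral_Ioi_of_comp_div_eq {k : ℝ} (hk : 0 < k) {g : ℝ → ℝ≥0∞}
    (hg : Measurable g) (hg_inv : ∀ z ∈ Ioi (0 : ℝ), g (k / z) = g z) :
    2 * ∫⁻ z in Ioi 0, g z = ∫⁻ z in Ioi 0, ENNReal.ofReal (1 + k / z ^ 2) * g z := by
  rw [two_mul]
  conv_lhs => arg 2; rw [← lintegral_comp_div_Ioi hk g]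
  rw [← lintegral_add_left hg]
  refine setLIntegral_congr_fun measurableSet_Ioi fun z (hz : 0 < z) => ?_
  rw [hg_inv z hz, ENNReal.ofReal_add zero_le_one (by positivity), add_mul, ENNReal.ofReal_one,
    one_mul]

lemma lintegral_exp_neg_mul_sq_sub_div_sq_Ioi {a b : ℝ} (ha : 0 < a) (hb : 0 ≤ b) :
    ∫⁻ z in Ioi 0, ENNReal.ofReal (exp (-a * z ^ 2 - b / z ^ 2))
      = ENNReal.ofReal (√(π / a) / 2 * exp (-2 * √(a * b))) := by
  rcases hb.eq_or_lt with rfl | hb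
  · simp only [zero_div, sub_zero, mul_zero, sqrt_zero, exp_zero, mul_one]
    rw [← ofReal_integral_eq_lintegral_ofReal (integrable_exp_neg_mul_sq ha).integrableOn
      (ae_of_all _ fun _ => (exp_pos _).le), integral_gaussian_Ioi]
  set g : ℝ → ℝ≥0∞ := fun z => ENNReal.ofReal (exp (-a * z ^ 2 - b / z ^ 2))
  set k := √(b / a)
  have hk : 0 < k := sqrt_pos.2 (div_pos hb ha)
  have hak : a * k ^ 2 = b := by rw [sq_sqrt (div_pos hb ha).le]; field_simp
  have hg_inv : ∀ z ∈ Ioi (0 : ℝ), g (k / z) = g z := fun z (hz : 0 < z) => by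
    show ENNReal.ofReal (exp (-a * (k / z) ^ 2 - b / (k / z) ^ 2)) = ENNReal.ofReal (exp _)
    rw [← hak]
    congr 2
    field_simp
    ring
  have hg_sq : ∀ z ∈ Ioi (0 : ℝ), g z =
      ENNReal.ofReal (exp (-2 * √(a * b))) * ENNReal.ofReal (exp (-a * (z - k / z) ^ 2)) := by
    intro z (hz : 0 < z)
    have hsqrt : √(a * b) = a * k := by
      rw [← hak, show a * (a * k ^ 2) = (a * k) ^ 2 by ring, sqrt_sq (by positivity)]
    show ENNReal.ofReal (exp _) = _
    rw [← ENNReal.ofReal_mul (exp_pos _).le, ← exp_add, hsqrt, ← hak]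
    congr 2
    field_simp
    ring
  have hdouble : 2 * ∫⁻ z in Ioi 0, g z =
      ENNReal.ofReal (exp (-2 * √(a * b))) * ENNReal.ofReal √(π / a) := by
    rw [two_mul_lintegral_Ioi_of_comp_div_eq hk (by fun_prop) hg_inv,
      ← lintegral_exp_neg_mul_sq ha, ← lintegral_comp_sub_div_Ioi hk,
      ← lintegral_const_mul' _ _ ENNReal.ofReal_ne_top]
    refine setLIntegral_congr_fun measurableSet_Ioi fun z hz => ?_
    rw [hg_sq z hz, mul_left_comm]
  rw [ENNReal.ofReal_mul (by positivity), ENNReal.ofReal_div_of_pos two_pos, ENNReal.ofReal_ofNat,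
    mul_comm, ← mul_div_assoc, ENNReal.eq_div_iff two_ne_zero ENNReal.ofNat_ne_top, hdouble]

lemma map_mul_prod_gaussianReal {α : Type*} [MeasurableSpace α] {μ : Measure α} [SFinite μ]
    {τ : α → ℝ} (hτ : Measurable τ) (hτ0 : ∀ᵐ v ∂μ, τ v ≠ 0) :
    (μ.prod (gaussianReal 0 1)).map (fun p => τ p.1 * p.2)
      = volume.withDensity fun x => ∫⁻ v, gaussianPDF 0 (τ v ^ 2).toNNReal x ∂μ := by
  have hf : Measurable fun p : α × ℝ => τ p.1 * p.2 := by fun_prop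
  have hpdf : Measurable fun p : ℝ × α => gaussianPDF 0 (τ p.2 ^ 2).toNNReal p.1 :=
    measurable_uncurry_gaussianPDF.comp
      (f := fun p : ℝ × α => ((0 : ℝ), (τ p.2 ^ 2).toNNReal, p.1)) (by fun_prop)
  ext s hs
  rw [Measure.map_apply hf hs, Measure.prod_apply (hf hs), withDensity_apply _ hs,
    lintegral_lintegral_swap hpdf.aemeasurable]
  refine lintegral_congr_ae (hτ0.mono fun v hv => ?_)
  have hmap : (gaussianReal 0 1).map (τ v * ·) = gaussianReal 0 (τ v ^ 2).toNNReal := by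
    rw [gaussianReal_map_const_mul, mul_zero]
    congr
    ext
    simp [sq_nonneg]
  show gaussianReal 0 1 ((τ v * ·) ⁻¹' s) = ∫⁻ x in s, gaussianPDF 0 (τ v ^ 2).toNNReal x
  rw [← Measure.map_apply (measurable_const_mul _) hs, hmap,
    gaussianReal_apply 0 (by simpa using hv)]

lemma lintegral_expMeasure {r : ℝ} {f : ℝ → ℝ≥0∞} (hf : Measurable f) :
    ∫⁻ v, f v ∂expMeasure r = ∫⁻ v in Ioi 0, ENNReal.ofReal (r * exp (-(r * v))) * f v := by
  have hpdf : Measurable (exponentialPDF r) :=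
    (measurable_exponentialPDFReal r).ennreal_ofReal
  have hsupp : (fun v => exponentialPDF r v * f v).support ⊆ Ici 0 := fun v hv =>
    mem_Ici.2 (not_lt.1 fun hneg => hv (by simp [exponentialPDF_of_neg hneg]))
  rw [show expMeasure r = volume.withDensity (exponentialPDF r) from rfl,
    lintegral_withDensity_eq_lintegral_mul _ hpdf hf]
  simp only [Pi.mul_apply]
  rw [← setLIntegral_eq_of_support_subset hsupp, setLIntegral_congr Ioi_ae_eq_Ici.symm]
  exact setLIntegral_congr_fun measurableSet_Ioi fun v hv => by
    rw [exponentialPDF_of_nonneg (le_of_lt hv)]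

lemma lintegral_gaussianPDF_expMeasure_eq_lintegral_Ioi {lam σ : ℝ} (hlam : 0 < lam)
    (hσ : 0 < σ) (x : ℝ) :
    ∫⁻ v, gaussianPDF 0 ((σ * √v) ^ 2).toNNReal x ∂expMeasure lam
      = ENNReal.ofReal (2 * lam / (√(2 * π) * σ)) *
          ∫⁻ w in Ioi 0, ENNReal.ofReal (exp (-lam * w ^ 2 - x ^ 2 / (2 * σ ^ 2) / w ^ 2)) := by
  have hpdf : Measurable fun v => gaussianPDF 0 ((σ * √v) ^ 2).toNNReal x :=
    measurable_uncurry_gaussianPDF.comp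
      (f := fun v : ℝ => ((0 : ℝ), ((σ * √v) ^ 2).toNNReal, x)) (by fun_prop)
  rw [lintegral_expMeasure hpdf, ← lintegral_comp_sq_Ioi,
    ← lintegral_const_mul' _ _ ENNReal.ofReal_ne_top]
  refine setLIntegral_congr_fun measurableSet_Ioi fun w (hw : 0 < w) => ?_
  have hvar : (((σ * √(w ^ 2)) ^ 2).toNNReal : ℝ) = (σ * w) ^ 2 := by
    rw [sqrt_sq hw.le, Real.coe_toNNReal _ (sq_nonneg _)]
  have hsqrt : √(2 * π * (σ * w) ^ 2) = √(2 * π) * (σ * w) := by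
    rw [sqrt_mul (by positivity), sqrt_sq (by positivity)]
  have hexp : exp (-lam * w ^ 2 - x ^ 2 / (2 * σ ^ 2) / w ^ 2)
      = exp (-(lam * w ^ 2)) * exp (-x ^ 2 / (2 * (σ * w) ^ 2)) := by
    rw [← exp_add]
    congr 1
    field_simp
    ring
  rw [gaussianPDF, gaussianPDFReal, hvar, hsqrt, sub_zero, hexp,
    ← ENNReal.ofReal_mul (by positivity), ← ENNReal.ofReal_mul (by positivity),
    ← ENNReal.ofReal_mul (by positivity)]
  congr 1
  field_simp

lemma lintegral_gaussianPDF_expMeasure {lam σ : ℝ} (hlam : 0 < lam) (hσ : 0 < σ) (x : ℝ) :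
    ∫⁻ v, gaussianPDF 0 ((σ * √v) ^ 2).toNNReal x ∂expMeasure lam
      = ENNReal.ofReal (√(2 * lam) / (2 * σ) * exp (-(√(2 * lam) * |x|) / σ)) := by
  have hsq : lam * (x ^ 2 / (2 * σ ^ 2)) = (√(2 * lam) * |x| / (2 * σ)) ^ 2 := by
    rw [div_pow, mul_pow, sq_sqrt (by positivity), sq_abs]
    field_simp
  have hconst : 2 * lam / (√(2 * π) * σ) * (√(π / lam) / 2) = √(2 * lam) / (2 * σ) := by
    rw [sqrt_div pi_pos.le, sqrt_mul zero_le_two, sqrt_mul zero_le_two]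
    field_simp
    rw [sq_sqrt hlam.le, sq_sqrt zero_le_two]
  rw [lintegral_gaussianPDF_expMeasure_eq_lintegral_Ioi hlam hσ,
    lintegral_exp_neg_mul_sq_sub_div_sq_Ioi hlam (by positivity),
    ← ENNReal.ofReal_mul (by positivity), hsq, sqrt_sq (by positivity), ← hconst]
  ring_nf

lemma ae_pos_expMeasure {r : ℝ} (hr : 0 < r) : ∀ᵐ v ∂expMeasure r, 0 < v := by
  have := isProbabilityMeasure_expMeasure hr
  have hIic : expMeasure r (Iic 0) = 0 := by
    rw [← ofReal_cdf, cdf_expMeasure_eq hr]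
    simp
  exact ae_iff.2 (measure_mono_null (fun v (hv : ¬ 0 < v) => not_lt.1 hv) hIic)

/-- If `V` is exponential with rate `λ` and `Z` an independent standard
Gaussian, then `X = σ√V ⬝ Z` is Laplace distributed with density
`x ↦ (√(2λ)/(2σ)) exp(-√(2λ)|x|/σ)`. -/
theorem sqrtExp_mul_gaussian_laplace
    {Ω : Type*} [MeasurableSpace Ω] (P : Measure Ω) [IsProbabilityMeasure P]
    (lam σ : ℝ) (hlam : 0 < lam) (hσ : 0 < σ)
    (V Z : Ω → ℝ) (hVm : Measurable V) (hZm : Measurable Z)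
    (hV : Measure.map V P = expMeasure lam)
    (hZ : Measure.map Z P = gaussianReal 0 1)
    (hindep : IndepFun V Z P) :
    Measure.map (fun ω => σ * Real.sqrt (V ω) * Z ω) P
      = volume.withDensity (fun x => ENNReal.ofReal
          (Real.sqrt (2 * lam) / (2 * σ) * Real.exp (-(Real.sqrt (2 * lam) * |x|) / σ))) := by
  have := isProbabilityMeasure_expMeasure hlam
  have hpair : P.map (fun ω => (V ω, Z ω)) = (expMeasure lam).prod (gaussianReal 0 1) := by
    rw [← hV, ← hZ]
    exact (indepFun_iff_map_prod_eq_prod_map_map hVm.aemeasurable hZm.aemeasurable).1 hindep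
  have hscale : ∀ᵐ v ∂expMeasure lam, σ * √v ≠ 0 :=
    (ae_pos_expMeasure hlam).mono fun v hv => by positivity
  have hX : (fun ω => σ * √(V ω) * Z ω)
      = (fun p : ℝ × ℝ => σ * √p.1 * p.2) ∘ fun ω => (V ω, Z ω) := rfl
  rw [hX, ← Measure.map_map (by fun_prop) (hVm.prodMk hZm), hpair,
    map_mul_prod_gaussianReal (τ := fun v => σ * √v) (by fun_prop) hscale]
  congr with x
  exact lintegral_gaussianPDF_expMeasure hlam hσ x
end

section
/- Let θ ∈ ℝ, σ > 0, t > 0 and u ∈ ℝ. Then, taking principal branch complex powers, lim_{ν → 0⁺} (1 − iθνu + (σ²/2)νu²)^{−t/ν} = exp(iθtu − (1/2)σ²tu²); that is, the characteristic function of the Variance Gamma marginal at time t converges pointwise, as ν ↓ 0, to the characteristic function of the Gaussian distribution N(θt, σ²t). -/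
open MeasureTheory ProbabilityTheory Complex Filter Topology

/-- As `ν ↓ 0`, the characteristic function of the Variance Gamma
marginal at time `t` converges pointwise to the characteristic function of `N(θt, σ²t)`:
`lim_{ν→0⁺} (1 - iθνu + (σ²/2)νu²)^(-t/ν) = exp(iθtu - σ²tu²/2)`. -/
theorem varianceGamma_charFun_tendsto_gaussian_charFun
    (θ σ t : ℝ) (hσ : 0 < σ) (ht : 0 < t) (u : ℝ) :
    Tendsto
      (fun ν : ℝ =>
        ((1 : ℂ) - Complex.I * θ * ν * u + σ ^ 2 / 2 * ν * u ^ 2) ^ (-(t / ν : ℂ)))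
      (𝓝[>] 0)
      (𝓝 (Complex.exp (Complex.I * θ * t * u - σ ^ 2 * t * u ^ 2 / 2))) := by
  set c : ℂ := -(Complex.I * θ * u) + σ ^ 2 / 2 * u ^ 2 with hc
  -- derivative of ν ↦ log (1 + ν c) at 0 is c
  have h1 : HasDerivAt (fun ν : ℝ => (1 : ℂ) + ν * c) c 0 := by
    have := ((hasDerivAt_id (0:ℝ)).ofReal_comp.mul_const c).const_add (1 : ℂ)
    simpa using this
  have hderiv : HasDerivAt (fun ν : ℝ => Complex.log (1 + ν * c)) c 0 := by
    have := h1.clog_real (by simp)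
    simpa using this
  have hslope := (hasDerivAt_iff_tendsto_slope.mp hderiv)
  have hkey : Tendsto (fun ν : ℝ => (ν : ℂ)⁻¹ * Complex.log (1 + ν * c)) (𝓝[>] 0) (𝓝 c) := by
    have h := hslope.mono_left (nhdsWithin_mono 0 (fun x hx => ne_of_gt hx : Set.Ioi (0:ℝ) ⊆ {0}ᶜ))
    refine h.congr (fun ν => ?_)
    simp [slope, Complex.real_smul, Complex.ofReal_inv]
  have hlim : Tendsto (fun ν : ℝ => Complex.exp ((-(t:ℂ)) * ((ν : ℂ)⁻¹ * Complex.log (1 + ν * c))))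
      (𝓝[>] 0) (𝓝 (Complex.exp ((-(t:ℂ)) * c))) :=
    (Complex.continuous_exp.tendsto _).comp (hkey.const_mul (-(t:ℂ)))
  have heq : Complex.exp ((-(t:ℂ)) * c) =
      Complex.exp (Complex.I * θ * t * u - σ ^ 2 * t * u ^ 2 / 2) := by
    rw [hc]; ring_nf
  rw [heq] at hlim
  refine Tendsto.congr' ?_ hlim
  filter_upwards [self_mem_nhdsWithin] with ν hν
  have hν0 : (0:ℝ) < ν := hν
  have hbase : ((1 : ℂ) - Complex.I * θ * ν * u + σ ^ 2 / 2 * ν * u ^ 2) = 1 + ν * c := by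
    rw [hc]; ring
  have hne : (1 : ℂ) + ν * c ≠ 0 := by
    intro h
    have hre := congrArg Complex.re h
    simp [hc, ← Complex.ofReal_pow, Complex.add_re, Complex.mul_re] at hre
    nlinarith [sq_nonneg u, sq_nonneg σ, sq_nonneg (σ * u)]
  rw [hbase, Complex.cpow_def_of_ne_zero hne]
  congr 1
  ring
end

section
/- Let θ ∈ ℝ, σ > 0 and t > 0. For each ν > 0, let μ_ν be the law of X_ν = θG_ν + σ√(G_ν) · Z, where Z is a standard Gaussian random variable and G_ν is a Gamma(t/ν, 1/ν) distributed random variable independent of Z. Then as ν ↓ 0 (along any sequence νₙ → 0⁺), μ_ν converges weakly to the Gaussian distribution N(θt, σ²t). -/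
/-!
`G_ν ~ Gamma(t/ν, 1/ν)` has mean `t` and variance `tν`, so by Chebyshev `G_ν → t` in
probability as `ν → 0`. Slutsky's theorem then gives `(Z, G_ν) → (Z, t)` in distribution, and
the continuous mapping `(z, g) ↦ θ g + σ √g z` turns this into `X_ν → θ t + σ √t Z`, whose law
is `N(θt, σ²t)`.
-/

open MeasureTheory ProbabilityTheory Filter Topology

namespace ProbabilityTheory

open Set Real

variable {a r : ℝ}

lemma gammaPDFReal_mul_pow_of_pos (k : ℕ) {x : ℝ} (hx : 0 < x) :
    gammaPDFReal a r x * x ^ k = r ^ a / Gamma a * (x ^ (a + k - 1) * exp (-(r * x))) := by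
  rw [gammaPDFReal, if_pos hx.le, add_sub_right_comm, rpow_add hx, rpow_natCast]
  ring

lemma gammaPDFReal_of_neg {x : ℝ} (hx : x < 0) : gammaPDFReal a r x = 0 :=
  if_neg hx.not_ge

lemma integrable_gammaPDFReal_mul_pow (ha : 0 < a) (hr : 0 < r) (k : ℕ) :
    Integrable (fun x ↦ gammaPDFReal a r x * x ^ k) := by
  have hk : -1 < a + k - 1 := by linarith [(Nat.cast_nonneg k : (0 : ℝ) ≤ k)]
  have hIoi : IntegrableOn (fun x ↦ gammaPDFReal a r x * x ^ k) (Ioi 0) := by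
    refine IntegrableOn.congr_fun ((integrableOn_rpow_mul_exp_neg_mul_rpow hk zero_lt_one
      hr).const_mul (r ^ a / Gamma a)) (fun x hx ↦ ?_) measurableSet_Ioi
    simp [gammaPDFReal_mul_pow_of_pos k hx]
  refine (Iff.mpr integrableOn_Ici_iff_integrableOn_Ioi hIoi).integrable_of_forall_notMem_eq_zero
    fun x hx ↦ ?_
  rw [gammaPDFReal_of_neg (not_le.mp hx), zero_mul]

lemma integral_gammaPDFReal_mul_pow (ha : 0 < a) (hr : 0 < r) (k : ℕ) :
    ∫ x, gammaPDFReal a r x * x ^ k = Gamma (a + k) / (Gamma a * r ^ k) := by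
  rw [← setIntegral_eq_integral_of_forall_compl_eq_zero (s := Ici 0) fun x hx ↦ by
      rw [gammaPDFReal_of_neg (not_le.mp hx), zero_mul],
    integral_Ici_eq_integral_Ioi, setIntegral_congr_fun measurableSet_Ioi
      fun x hx ↦ gammaPDFReal_mul_pow_of_pos k hx,
    integral_const_mul, integral_rpow_mul_exp_neg_mul_Ioi (by positivity) hr,
    one_div, inv_rpow hr.le, rpow_add hr, rpow_natCast]
  have := (Gamma_pos_of_pos ha).ne'
  field_simp

lemma integral_gammaMeasure (ha : 0 < a) (hr : 0 < r) (g : ℝ → ℝ) :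
    ∫ x, g x ∂gammaMeasure a r = ∫ x, gammaPDFReal a r x * g x := by
  rw [gammaMeasure, integral_withDensity_eq_integral_toReal_smul (f := gammaPDF a r)
    (measurable_gammaPDFReal a r).ennreal_ofReal (ae_of_all _ fun _ ↦ ENNReal.ofReal_lt_top)]
  simp [gammaPDF, ENNReal.toReal_ofReal (gammaPDFReal_nonneg ha hr _)]

lemma integrable_gammaMeasure_iff (ha : 0 < a) (hr : 0 < r) {g : ℝ → ℝ} :
    Integrable g (gammaMeasure a r) ↔ Integrable fun x ↦ gammaPDFReal a r x * g x := by
  rw [gammaMeasure, integrable_withDensity_iff_integrable_smul' (f := gammaPDF a r)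
    (measurable_gammaPDFReal a r).ennreal_ofReal (ae_of_all _ fun _ ↦ ENNReal.ofReal_lt_top)]
  simp [gammaPDF, ENNReal.toReal_ofReal (gammaPDFReal_nonneg ha hr _)]

lemma integrable_pow_gammaMeasure (ha : 0 < a) (hr : 0 < r) (k : ℕ) :
    Integrable (fun x ↦ x ^ k) (gammaMeasure a r) :=
  (integrable_gammaMeasure_iff ha hr).2 (integrable_gammaPDFReal_mul_pow ha hr k)

lemma integral_pow_gammaMeasure (ha : 0 < a) (hr : 0 < r) (k : ℕ) :
    ∫ x, x ^ k ∂gammaMeasure a r = Gamma (a + k) / (Gamma a * r ^ k) := by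
  rw [integral_gammaMeasure ha hr, integral_gammaPDFReal_mul_pow ha hr]

lemma memLp_id_gammaMeasure (ha : 0 < a) (hr : 0 < r) : MemLp id 2 (gammaMeasure a r) :=
  (memLp_two_iff_integrable_sq aestronglyMeasurable_id).2 (integrable_pow_gammaMeasure ha hr 2)

lemma integral_id_gammaMeasure (ha : 0 < a) (hr : 0 < r) : ∫ x, x ∂gammaMeasure a r = a / r := by
  have h := integral_pow_gammaMeasure ha hr 1
  simp only [pow_one, Nat.cast_one, Gamma_add_one ha.ne'] at h
  rw [h]
  field_simp [(Gamma_pos_of_pos ha).ne']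

lemma variance_id_gammaMeasure (ha : 0 < a) (hr : 0 < r) :
    Var[id; gammaMeasure a r] = a / r ^ 2 := by
  have := isProbabilityMeasure_gammaMeasure ha hr
  have h := integral_pow_gammaMeasure ha hr 2
  rw [Nat.cast_ofNat, show a + 2 = a + 1 + 1 by ring, Gamma_add_one (by positivity),
    Gamma_add_one ha.ne'] at h
  rw [variance_eq_sub (memLp_id_gammaMeasure ha hr)]
  simp only [Pi.pow_apply, id_eq, h, integral_id_gammaMeasure ha hr]
  field_simp [(Gamma_pos_of_pos ha).ne']
  ring

lemma gammaMeasure_setOf_le_abs_sub_le (ha : 0 < a) (hr : 0 < r) {c : ℝ} (hc : 0 < c) :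
    gammaMeasure a r {x | c ≤ |x - a / r|} ≤ ENNReal.ofReal (a / r ^ 2 / c ^ 2) := by
  have := isProbabilityMeasure_gammaMeasure ha hr
  simpa [integral_id_gammaMeasure ha hr, variance_id_gammaMeasure ha hr] using
    meas_ge_le_variance_div_sq (memLp_id_gammaMeasure ha hr) hc

variable {Ω ι : Type*} [MeasurableSpace Ω] {P : Measure Ω}

lemma HasLaw.of_map_eq {E : Type*} [MeasurableSpace E] {μ : Measure E} [NeZero μ] {X : Ω → E}
    (h : P.map X = μ) : HasLaw X μ P :=
  ⟨.of_map_ne_zero (h ▸ NeZero.ne μ), h⟩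

lemma HasLaw.const_add_const_mul_gaussianReal {X : Ω → ℝ} (hX : HasLaw X (gaussianReal 0 1) P)
    (m s : ℝ) : HasLaw (fun ω ↦ m + s * X ω) (gaussianReal m (s ^ 2).toNNReal) P := by
  have h := gaussianReal_add_const (gaussianReal_const_mul hX s) m
  simp only [mul_zero, zero_add, mul_one] at h
  convert h using 2 with ω
  · exact add_comm _ _
  · exact Real.toNNReal_of_nonneg (sq_nonneg s)

lemma tendstoInMeasure_of_hasLaw_gammaMeasure {l : Filter ι} {t : ℝ} (ht : 0 < t) {ν : ι → ℝ}
    (hν : ∀ i, 0 < ν i) (hlim : Tendsto ν l (𝓝 0)) {Y : ι → Ω → ℝ}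
    (hY : ∀ i, HasLaw (Y i) (gammaMeasure (t / ν i) (1 / ν i)) P) :
    TendstoInMeasure P Y l fun _ ↦ t := by
  rw [tendstoInMeasure_iff_dist]
  intro ε hε
  have hbound : ∀ i, P {ω | ε ≤ dist (Y i ω) t} ≤ ENNReal.ofReal (t * ν i / ε ^ 2) := fun i ↦ by
    have hνi := hν i
    have hmean : t / ν i / (1 / ν i) = t := by field_simp
    have hvar : t / ν i / (1 / ν i) ^ 2 = t * ν i := by field_simp
    rw [(hY i).measure_eq (p := fun x ↦ ε ≤ dist x t)
      (measurableSet_le measurable_const (by fun_prop))]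
    have h := gammaMeasure_setOf_le_abs_sub_le (div_pos ht hνi) (one_div_pos.2 hνi) hε
    rw [hmean, hvar] at h
    simpa only [Real.dist_eq] using h
  have hlim' : Tendsto (fun i ↦ ENNReal.ofReal (t * ν i / ε ^ 2)) l (𝓝 0) := by
    simpa using ENNReal.tendsto_ofReal ((hlim.const_mul t).div_const (ε ^ 2))
  exact tendsto_of_tendsto_of_tendsto_of_le_of_le tendsto_const_nhds hlim' (fun _ ↦ zero_le)
    hbound

end ProbabilityTheory

theorem varianceGamma_tendsto_gaussian_weakly_general
    {Ω : Type*} [MeasurableSpace Ω] (P : Measure Ω)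
    (θ σ t : ℝ) (ht : 0 < t)
    (G : ℝ → Ω → ℝ) (Z : Ω → ℝ)
    (hG : ∀ ν : ℝ, 0 < ν → Measure.map (G ν) P = gammaMeasure (t / ν) (1 / ν))
    (hZ : Measure.map Z P = gaussianReal 0 1)
    (νseq : ℕ → ℝ) (hpos : ∀ n, 0 < νseq n) (hlim : Tendsto νseq atTop (𝓝 0)) :
    ∀ f : BoundedContinuousFunction ℝ ℝ,
      Tendsto
        (fun n => ∫ x, f x ∂(Measure.map
          (fun ω => θ * G (νseq n) ω + σ * Real.sqrt (G (νseq n) ω) * Z ω) P))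
        atTop
        (𝓝 (∫ x, f x ∂(gaussianReal (θ * t) (Real.toNNReal (σ ^ 2 * t))))) := by
  have hZlaw : HasLaw Z (gaussianReal 0 1) P := HasLaw.of_map_eq hZ
  have := hZlaw.isProbabilityMeasure
  have hGlaw : ∀ n, HasLaw (G (νseq n)) (gammaMeasure (t / νseq n) (1 / νseq n)) P := fun n ↦
    have := isProbabilityMeasure_gammaMeasure (div_pos ht (hpos n)) (one_div_pos.2 (hpos n))
    HasLaw.of_map_eq (hG _ (hpos n))
  have hGt : TendstoInMeasure P (fun n ↦ G (νseq n)) atTop fun _ ↦ t :=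
    tendstoInMeasure_of_hasLaw_gammaMeasure ht hpos hlim hGlaw
  have hdist := (tendstoInDistribution_const (l := atTop) hZlaw.aemeasurable
    ).continuous_comp_prodMk_of_tendstoInMeasure_const
    (g := fun p : ℝ × ℝ ↦ θ * p.2 + σ * Real.sqrt p.2 * p.1) (by fun_prop) hGt
    fun n ↦ (hGlaw n).aemeasurable
  have hlaw := (hZlaw.const_add_const_mul_gaussianReal (θ * t) (σ * Real.sqrt t)).map_eq
  rw [mul_pow, Real.sq_sqrt ht.le] at hlaw
  intro f
  simpa [hlaw] using ProbabilityMeasure.tendsto_iff_forall_integral_tendsto.1 hdist.tendsto f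

/-- Let `μ_ν` be the law of `X_ν = θ G_ν + σ √(G_ν) ⬝ Z` where `Z` is a
standard Gaussian and `G_ν ~ Gamma(t/ν, 1/ν)` is independent of `Z`. Then along any
sequence `νₙ → 0⁺`, the laws `μ_{νₙ}` converge weakly to `N(θt, σ²t)`: integrals of every
bounded continuous function converge. -/
theorem varianceGamma_tendsto_gaussian_weakly
    {Ω : Type*} [MeasurableSpace Ω] (P : Measure Ω) [IsProbabilityMeasure P]
    (θ σ t : ℝ) (hσ : 0 < σ) (ht : 0 < t)
    (G : ℝ → Ω → ℝ) (Z : Ω → ℝ) (hGm : ∀ ν, Measurable (G ν)) (hZm : Measurable Z)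
    (hG : ∀ ν : ℝ, 0 < ν → Measure.map (G ν) P = gammaMeasure (t / ν) (1 / ν))
    (hZ : Measure.map Z P = gaussianReal 0 1)
    (hindep : ∀ ν : ℝ, 0 < ν → IndepFun (G ν) Z P)
    (νseq : ℕ → ℝ) (hpos : ∀ n, 0 < νseq n) (hlim : Tendsto νseq atTop (𝓝 0)) :
    ∀ f : BoundedContinuousFunction ℝ ℝ,
      Tendsto
        (fun n => ∫ x, f x ∂(Measure.map
          (fun ω => θ * G (νseq n) ω + σ * Real.sqrt (G (νseq n) ω) * Z ω) P))
        atTop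
        (𝓝 (∫ x, f x ∂(gaussianReal (θ * t) (Real.toNNReal (σ ^ 2 * t))))) :=
  varianceGamma_tendsto_gaussian_weakly_general P θ σ t ht G Z hG hZ νseq hpos hlim
end
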